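/- Let R be a semiartinian von Neumann regular ring with primitive factors artinian, of finite Loewy length σ+1 with σ ≥ 1. A right R-module M is R-projective if and only if for each 0 < α ≤ σ, every homomorphism φ : M → S_{α+1}/S_α factors through the canonical projection π_α : S_{α+1} → S_{α+1}/S_α. -/
import Mathlib


universe u

open Submodule

/-- The socle of a module: the supremum of all simple submodules. -/
noncomputable def socle (R : Type u) [Ring R] (M : Type u) [AddCommGroup M] [Module R M] :
    Submodule R M :=
  sSup {S : Submodule R M | IsAtom S}

/-- The Loewy (socle) sequence of a module, defined by transfinite recursion:
`loewy R M 0 = ⊥`, `loewy R M (α+1) / loewy R M α = Soc (M ⧸ loewy R M α)`, and unions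
at limit ordinals. -/
noncomputable def loewy (R : Type u) [Ring R] (M : Type u) [AddCommGroup M] [Module R M]
    (o : Ordinal.{u}) : Submodule R M :=
  o.limitRecOn ⊥ (fun _ N => (socle R (M ⧸ N)).comap N.mkQ)
    (fun o _ IH => ⨆ (b : Ordinal) (h : b < o), IH b h)

/-- The Loewy length of a module: the least ordinal `o` with `loewy R M o = ⊤`. -/
noncomputable def loewyLength (R : Type u) [Ring R] (M : Type u) [AddCommGroup M]
    [Module R M] : Ordinal.{u} :=
  sInf {o : Ordinal | loewy R M o = ⊤}

/-- A ring is semiartinian if every nonzero module has a nonzero socle. -/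
def IsSemiartinianRing (R : Type u) [Ring R] : Prop :=
  ∀ (M : Type u) [AddCommGroup M] [Module R M], Nontrivial M → socle R M ≠ ⊥

/-- A ring is von Neumann regular if for every `r` there is `s` with `r * s * r = r`. -/
def IsVonNeumannRegularRing (R : Type u) [Ring R] : Prop :=
  ∀ r : R, ∃ s : R, r * s * r = r

/-- `R` has primitive factors artinian: for every primitive ideal `P` (= annihilator of a
simple module), the factor `R/P` is artinian. -/
def HasPrimitiveFactorsArtinian (R : Type u) [Ring R] : Prop :=
  ∀ (M : Type u) [AddCommGroup M] [Module R M], IsSimpleModule R M →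
    IsArtinian R (R ⧸ (Module.annihilator R M : Submodule R R))

/-- The `α`-th layer of the Loewy sequence of `R`, as a submodule of `R ⧸ loewy R R α`. -/
noncomputable def loewyLayer (R : Type u) [Ring R] (α : Ordinal.{u}) :
    Submodule R (R ⧸ loewy R R α) :=
  (loewy R R (α + 1)).map (loewy R R α).mkQ

/-- The canonical projection `π_α : S_{α+1} → S_{α+1}/S_α`. -/
noncomputable def layerProj (R : Type u) [Ring R] (α : Ordinal.{u}) :
    (loewy R R (α + 1) : Submodule R R) →ₗ[R] (loewyLayer R α) :=
  LinearMap.codRestrict _ ((loewy R R α).mkQ.comp (loewy R R (α + 1)).subtype)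
    (fun x => ⟨(x : R), x.2, rfl⟩)

/-- `M` is weakly `R`-projective: every homomorphism from `M` to a layer `S_{α+1}/S_α`
(`0 < α`) with finitely generated image factors through `π_α : S_{α+1} → S_{α+1}/S_α`. -/
def IsWeaklyRProjective (R : Type u) [Ring R] (M : Type u) [AddCommGroup M]
    [Module R M] : Prop :=
  ∀ α : Ordinal.{u}, 0 < α →
    ∀ φ : M →ₗ[R] (loewyLayer R α), (LinearMap.range φ).FG →
      ∃ ψ : M →ₗ[R] (loewy R R (α + 1) : Submodule R R), (layerProj R α).comp ψ = φ

/-- `M` is layer projective: for each `0 < α`, every simple submodule of the `α`-th layer of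
`M` is isomorphic to a simple (direct summand) submodule of the `α`-th layer of `R`, i.e. the
`α`-th layer of `M` is a projective `R/S_α`-module. -/
def IsLayerProjective (R : Type u) [Ring R] (M : Type u) [AddCommGroup M]
    [Module R M] : Prop :=
  ∀ α : Ordinal.{u}, 0 < α →
    ∀ T : Submodule R ((loewy R M (α + 1)).map (loewy R M α).mkQ), IsAtom T →
      ∃ T' : Submodule R (loewyLayer R α), IsAtom T' ∧ Nonempty (T ≃ₗ[R] T')

/-- The submodule `M·S` of `M`, generated by all products `s • m` with `s ∈ S`. -/
def smulSub (R : Type u) [Ring R] (M : Type u) [AddCommGroup M] [Module R M]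
    (S : Submodule R R) : Submodule R M :=
  Submodule.span R {x : M | ∃ s ∈ S, ∃ m : M, s • m = x}

/-- `M` is `R`-projective. -/
def IsRProjective (R : Type u) [Ring R] (M : Type u) [AddCommGroup M] [Module R M] : Prop :=
  ∀ (I : Submodule R R) (f : M →ₗ[R] R ⧸ I), ∃ g : M →ₗ[R] R, I.mkQ.comp g = f

section Aux

variable {R : Type u} [Ring R]

lemma loewy_zero (M : Type u) [AddCommGroup M] [Module R M] : loewy R M 0 = ⊥ :=
  Ordinal.limitRecOn_zero ..

lemma loewy_succ (M : Type u) [AddCommGroup M] [Module R M] (α : Ordinal.{u}) :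
    loewy R M (α + 1) = (socle R (M ⧸ loewy R M α)).comap (loewy R M α).mkQ :=
  Ordinal.limitRecOn_succ ..

lemma loewy_le_succ (M : Type u) [AddCommGroup M] [Module R M] (α : Ordinal.{u}) :
    loewy R M α ≤ loewy R M (α + 1) := by
  rw [loewy_succ]
  intro x hx
  simp only [Submodule.mem_comap, Submodule.mkQ_apply, (Submodule.Quotient.mk_eq_zero _).mpr hx]
  exact zero_mem _

lemma isSemisimpleModule_socle (M : Type u) [AddCommGroup M] [Module R M] :
    IsSemisimpleModule R (socle R M) := by
  rw [socle, sSup_eq_iSup]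
  exact isSemisimpleModule_biSup_of_isSemisimpleModule_submodule
    (fun S hS => by
      haveI : IsSimpleModule R S := isSimpleModule_iff_isAtom.mpr hS
      infer_instance)

lemma loewyLayer_eq (α : Ordinal.{u}) :
    loewyLayer R α = socle R (R ⧸ loewy R R α) := by
  rw [loewyLayer, loewy_succ, Submodule.map_comap_eq, Submodule.range_mkQ, top_inf_eq]

lemma layerProj_surjective (α : Ordinal.{u}) : Function.Surjective (layerProj R α) := by
  rintro ⟨t, ht⟩
  obtain ⟨x, hx, rfl⟩ := Submodule.mem_map.mp ht
  exact ⟨⟨x, hx⟩, rfl⟩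

lemma layerProj_zero_injective : Function.Injective (layerProj R 0) := by
  intro a b h
  have h1 : ((loewy R R 0).mkQ : R →ₗ[R] _) a.1 = (loewy R R 0).mkQ b.1 := congrArg Subtype.val h
  have h2 : (a.1 : R) - b.1 ∈ loewy R R 0 := (Submodule.Quotient.eq _).mp h1
  rw [loewy_zero, Submodule.mem_bot] at h2
  exact Subtype.ext (sub_eq_zero.mp h2)

lemma exists_section {L T : Type u} [AddCommGroup L] [Module R L] [AddCommGroup T] [Module R T]
    [IsSemisimpleModule R L] (q : L →ₗ[R] T) (hq : Function.Surjective q) :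
    ∃ s : T →ₗ[R] L, ∀ t, q (s t) = t := by
  obtain ⟨C, hC⟩ := exists_isCompl (LinearMap.ker q)
  have hbij : Function.Bijective (q ∘ₗ C.subtype) := by
    constructor
    · intro a b hab
      have hmem : ((a : L) - b) ∈ (LinearMap.ker q) ⊓ C :=
        ⟨LinearMap.mem_ker.mpr (by rw [map_sub, sub_eq_zero]; exact hab),
         sub_mem a.2 b.2⟩
      rw [hC.inf_eq_bot, Submodule.mem_bot] at hmem
      exact Subtype.ext (sub_eq_zero.mp hmem)
    · intro t
      obtain ⟨x, rfl⟩ := hq t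
      have hx : x ∈ (LinearMap.ker q) ⊔ C := by rw [hC.sup_eq_top]; trivial
      obtain ⟨k, hk, c, hc, rfl⟩ := Submodule.mem_sup.mp hx
      exact ⟨⟨c, hc⟩, by simp [LinearMap.mem_ker.mp hk]⟩
  let e := LinearEquiv.ofBijective (q ∘ₗ C.subtype) hbij
  refine ⟨C.subtype ∘ₗ (e.symm : T →ₗ[R] C), fun t => ?_⟩
  have := e.apply_symm_apply t
  exact this

end Aux

/-- Over a semiartinian von Neumann regular ring with primitive factors artinian of finite
Loewy length `σ + 1`, `σ ≥ 1`, a module `M` is `R`-projective iff for each `0 < α ≤ σ` every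
homomorphism `M → S_{α+1}/S_α` factors through `π_α : S_{α+1} → S_{α+1}/S_α`. -/
theorem isRProjective_iff_layers_factor
    (R : Type u) [Ring R] (hsa : IsSemiartinianRing R)
    (hvnr : IsVonNeumannRegularRing R) (hpfa : HasPrimitiveFactorsArtinian R)
    (σ : ℕ) (hσ : 1 ≤ σ)
    (hlen : loewy R R ((σ : Ordinal.{u}) + 1) = ⊤)
    (hne : loewy R R (σ : Ordinal.{u}) ≠ ⊤)
    (M : Type u) [AddCommGroup M] [Module R M] :
    IsRProjective R M ↔
      ∀ α : Ordinal.{u}, 0 < α → α ≤ (σ : Ordinal.{u}) →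
        ∀ φ : M →ₗ[R] (loewyLayer R α),
          ∃ ψ : M →ₗ[R] (loewy R R (α + 1) : Submodule R R), (layerProj R α).comp ψ = φ := by
  constructor
  · -- forward direction: R-projective implies layers factor
    intro hproj α _ _ φ
    obtain ⟨g, hg⟩ := hproj (loewy R R α) ((loewyLayer R α).subtype ∘ₗ φ)
    have h1 : ∀ m : M, (loewy R R α).mkQ (g m) = (φ m : R ⧸ loewy R R α) := fun m =>
      LinearMap.congr_fun hg m
    have hrange : ∀ m : M, g m ∈ loewy R R (α + 1) := by
      intro m
      obtain ⟨y, hy, hyx⟩ := Submodule.mem_map.mp (φ m).2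
      have h3 : g m - y ∈ loewy R R α := by
        apply (Submodule.Quotient.eq _).mp
        show (loewy R R α).mkQ (g m) = (loewy R R α).mkQ y
        rw [h1 m, hyx]
      have h4 := add_mem (loewy_le_succ R α h3) hy
      simpa using h4
    refine ⟨LinearMap.codRestrict _ g hrange, ?_⟩
    ext m
    exact h1 m
  · -- backward direction
    intro hfac
    -- extend factorization to α = 0
    have hfac' : ∀ n : ℕ, n ≤ σ →
        ∀ φ : M →ₗ[R] (loewyLayer R (n : Ordinal.{u})),
        ∃ ψ : M →ₗ[R] (loewy R R ((n : Ordinal.{u}) + 1) : Submodule R R),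
          (layerProj R (n : Ordinal.{u})).comp ψ = φ := by
      intro n hn φ
      rcases Nat.eq_zero_or_pos n with rfl | hpos
      · revert φ
        rw [show ((0 : ℕ) : Ordinal.{u}) = 0 from Nat.cast_zero]
        intro φ
        let e := LinearEquiv.ofBijective (layerProj R 0)
          ⟨layerProj_zero_injective, layerProj_surjective 0⟩
        refine ⟨e.symm.toLinearMap ∘ₗ φ, ?_⟩
        ext m
        exact congrArg Subtype.val (e.apply_symm_apply (φ m))
      · exact hfac n (by exact_mod_cast hpos) (by exact_mod_cast hn) φ
    set P : ℕ → Prop := fun n =>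
      ∀ I : Submodule R R, loewy R R (n : Ordinal.{u}) ≤ I →
        ∀ f : M →ₗ[R] R ⧸ I, ∃ g : M →ₗ[R] R, I.mkQ.comp g = f with hP
    have base : P (σ + 1) := by
      intro I hI f
      have hcast : (((σ + 1 : ℕ)) : Ordinal.{u}) = (σ : Ordinal.{u}) + 1 := Nat.cast_succ σ
      have hIT : I = ⊤ := top_le_iff.mp (by rw [← hlen, ← hcast]; exact hI)
      haveI : Subsingleton (R ⧸ I) := Submodule.Quotient.subsingleton_iff.mpr hIT
      exact ⟨0, by ext m; exact Subsingleton.elim _ _⟩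
    have step : ∀ n : ℕ, n ≤ σ → P (n + 1) → P n := by
      intro n hn ih I hI f
      have hcast : (((n + 1 : ℕ)) : Ordinal.{u}) = (n : Ordinal.{u}) + 1 := Nat.cast_succ n
      set J : Submodule R R := I ⊔ loewy R R ((n : Ordinal.{u}) + 1) with hJdef
      have hIJ : I ≤ J := le_sup_left
      have hJle : loewy R R (((n + 1 : ℕ)) : Ordinal.{u}) ≤ J := by
        rw [hcast]; exact le_sup_right
      let π : (R ⧸ I) →ₗ[R] R ⧸ J := Submodule.mapQ I J LinearMap.id (by simpa using hIJ)
      obtain ⟨g, hg⟩ := ih J hJle (π ∘ₗ f)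
      let m1 : (R ⧸ loewy R R (n : Ordinal.{u})) →ₗ[R] R ⧸ I :=
        Submodule.liftQ _ I.mkQ (by rwa [Submodule.ker_mkQ])
      let q' : (loewyLayer R (n : Ordinal.{u})) →ₗ[R] R ⧸ I :=
        m1 ∘ₗ (loewyLayer R (n : Ordinal.{u})).subtype
      have hq'layer : ∀ x : (loewy R R ((n : Ordinal.{u}) + 1) : Submodule R R),
          q' ((layerProj R (n : Ordinal.{u})) x) = I.mkQ (x : R) := fun x => rfl
      have hker : ∀ m : M, f m - I.mkQ (g m) ∈ LinearMap.range q' := by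
        intro m
        obtain ⟨y, hy⟩ := Submodule.mkQ_surjective I (f m)
        have h1 : π (f m) = J.mkQ (g m) := (LinearMap.congr_fun hg m).symm
        have h2 : J.mkQ y = J.mkQ (g m) := by
          have h2a : π (I.mkQ y) = J.mkQ y := by
            simp [π, Submodule.mapQ_apply]
          rw [← h2a, hy, h1]
        have h0 : (y - g m) ∈ J := (Submodule.Quotient.eq J).mp h2
        obtain ⟨i, hi, t, ht, hisum⟩ := Submodule.mem_sup.mp h0
        refine ⟨⟨(loewy R R (n : Ordinal.{u})).mkQ t, Submodule.mem_map.mpr ⟨t, ht, rfl⟩⟩, ?_⟩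
        have hq't : q' ⟨(loewy R R (n : Ordinal.{u})).mkQ t,
            Submodule.mem_map.mpr ⟨t, ht, rfl⟩⟩ = I.mkQ t := rfl
        rw [hq't, ← hy]
        have : y - g m = i + t := hisum.symm
        have hizero : I.mkQ i = 0 := by
          simpa using (Submodule.Quotient.mk_eq_zero I).mpr hi
        calc I.mkQ t = I.mkQ (i + t) - I.mkQ i := by rw [map_add]; abel
        _ = I.mkQ (y - g m) - I.mkQ i := by rw [hisum]
        _ = I.mkQ (y - g m) := by rw [hizero, sub_zero]
        _ = I.mkQ y - I.mkQ (g m) := by rw [map_sub]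
      let h' : M →ₗ[R] (LinearMap.range q') :=
        LinearMap.codRestrict _ (f - I.mkQ ∘ₗ g) (fun m => hker m)
      haveI : IsSemisimpleModule R (loewyLayer R (n : Ordinal.{u})) :=
        by rw [loewyLayer_eq]; exact isSemisimpleModule_socle _
      obtain ⟨s, hsec⟩ := exists_section q'.rangeRestrict (LinearMap.surjective_rangeRestrict q')
      obtain ⟨ψ, hψ⟩ := hfac' n hn (s ∘ₗ h')
      refine ⟨g + (loewy R R ((n : Ordinal.{u}) + 1)).subtype ∘ₗ ψ, ?_⟩
      ext m
      have h1 : (layerProj R (n : Ordinal.{u})) (ψ m) = s (h' m) := LinearMap.congr_fun hψ m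
      have h2 : (q'.rangeRestrict (s (h' m)) : R ⧸ I) = (h' m : R ⧸ I) :=
        congrArg Subtype.val (hsec (h' m))
      have h3 : I.mkQ ((ψ m : R)) = f m - I.mkQ (g m) := by
        rw [← hq'layer (ψ m), h1]
        exact h2
      show I.mkQ ((g + (loewy R R ((n : Ordinal.{u}) + 1)).subtype ∘ₗ ψ) m) = f m
      rw [LinearMap.add_apply, map_add, LinearMap.comp_apply, Submodule.coe_subtype, h3]
      abel
    have desc : ∀ k : ℕ, P (σ + 1 - k) := by
      intro k
      induction k with
      | zero => exact base
      | succ k ihk =>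
        rcases Nat.lt_or_ge k (σ + 1) with hk | hk
        · have h1 : σ + 1 - k = (σ + 1 - (k + 1)) + 1 := by omega
          exact step _ (by omega) (h1 ▸ ihk)
        · have h2 : σ + 1 - (k + 1) = σ + 1 - k := by omega
          rw [h2]; exact ihk
      
    have P0 := desc (σ + 1)
    rw [Nat.sub_self] at P0
    intro I f
    exact P0 I (by rw [Nat.cast_zero, loewy_zero]; exact bot_le) f
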